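/- Let (L,[·,·],α,β) be a 3-dimensional simple multiplicative BiHom-Lie algebra over ℂ. Then its induced Lie algebra (L,[·,·]'), with [x,y]' = [α⁻¹(x),β⁻¹(y)], is isomorphic to sl(2,ℂ); equivalently, there exists a basis (h,e,f) of L such that [h,e]' = 2e, [h,f]' = -2f, and [e,f]' = h. -/

import Mathlib

/-!
Substituting `β⁻¹α⁻¹`, resp. `β⁻²α⁻¹`, of the variables into BiHom-skew-symmetry and the
BiHom-Jacobi identity shows that the induced bracket `[x,y]' = [α⁻¹ x, β⁻¹ y]` is alternating and
satisfies the Jacobi identity. By multiplicativity the span of all brackets is an ideal, nonzero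
by simplicity, hence everything: the induced Lie algebra is perfect.

A perfect three-dimensional Lie algebra over an algebraically closed field of characteristic
`≠ 2` is `sl(2)`. By Engel's theorem some `ad x` is not nilpotent; it has trace zero and kills
`x`, so its eigenvalues are `0, c, -c` with `c ≠ 0`, with eigenvectors `x, y, z`. Then `ad x`
kills `[y,z]`, which is therefore a multiple `r • x`, and `r ≠ 0` because otherwise no bracket
has an `x`-component. Rescaling `x` and `z` gives the `sl(2)`-triple.
-/

/-- The induced bracket `[x,y]' = [α⁻¹ x, β⁻¹ y]` of a regular BiHom-Lie algebra. -/
def inducedBracket {K L : Type*} [Field K] [AddCommGroup L] [Module K L]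
    (br : L →ₗ[K] L →ₗ[K] L) (α β : L ≃ₗ[K] L) (x y : L) : L :=
  br (α.symm x) (β.symm y)

/-- `h` is an ideal of the BiHom-Lie algebra `(L, br, α, β)`. -/
def IsBiHomIdeal {K L : Type*} [Field K] [AddCommGroup L] [Module K L]
    (br : L →ₗ[K] L →ₗ[K] L) (α β : L →ₗ[K] L) (h : Submodule K L) : Prop :=
  (∀ x ∈ h, α x ∈ h) ∧ (∀ x ∈ h, β x ∈ h) ∧ (∀ x ∈ h, ∀ y : L, br x y ∈ h)

/-- `(L, br, α, β)` is simple: nonabelian and without proper ideals. -/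
def IsSimpleBiHom {K L : Type*} [Field K] [AddCommGroup L] [Module K L]
    (br : L →ₗ[K] L →ₗ[K] L) (α β : L →ₗ[K] L) : Prop :=
  (∃ x y : L, br x y ≠ 0) ∧
    ∀ h : Submodule K L, IsBiHomIdeal br α β h → h = ⊥ ∨ h = ⊤

open Module LieModule

section BiHom

variable {K L : Type*} [Field K] [AddCommGroup L] [Module K L] {br : L →ₗ[K] L →ₗ[K] L}

lemma isBiHomIdeal_map₂_top {α β : L →ₗ[K] L}
    (hmulα : ∀ x y : L, α (br x y) = br (α x) (α y))
    (hmulβ : ∀ x y : L, β (br x y) = br (β x) (β y)) :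
    IsBiHomIdeal br α β (Submodule.map₂ br ⊤ ⊤) := by
  have hinv : ∀ γ : L →ₗ[K] L, (∀ x y, γ (br x y) = br (γ x) (γ y)) →
      ∀ x ∈ Submodule.map₂ br ⊤ ⊤, γ x ∈ Submodule.map₂ br ⊤ ⊤ := fun γ hγ x hx ↦
    Submodule.map₂_le (r := (Submodule.map₂ br ⊤ ⊤).comap γ) |>.mpr
      (fun m _ n _ ↦ by
        rw [Submodule.mem_comap, hγ]; exact Submodule.apply_mem_map₂ _ trivial trivial) hx
  exact ⟨hinv α hmulα, hinv β hmulβ, fun _ _ _ ↦ Submodule.apply_mem_map₂ _ trivial trivial⟩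

lemma IsSimpleBiHom.map₂_top_eq_top {α β : L →ₗ[K] L} (hsimple : IsSimpleBiHom br α β)
    (hmulα : ∀ x y : L, α (br x y) = br (α x) (α y))
    (hmulβ : ∀ x y : L, β (br x y) = br (β x) (β y)) :
    Submodule.map₂ br ⊤ ⊤ = ⊤ := by
  obtain ⟨⟨x, y, hxy⟩, hideal⟩ := hsimple
  refine (hideal _ (isBiHomIdeal_map₂_top hmulα hmulβ)).resolve_left fun hbot ↦ hxy ?_
  simpa [hbot] using Submodule.apply_mem_map₂ br (Submodule.mem_top (x := x))
    (Submodule.mem_top (x := y))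

variable {α β : L ≃ₗ[K] L}

lemma inducedBracket_skew (hcomm : Function.Commute α β)
    (hskew : ∀ x y : L, br (β x) (α y) = - br (β y) (α x)) (x y : L) :
    inducedBracket br α β x y = - inducedBracket br α β y x := by
  have hcomm' : Function.Commute α β.symm := hcomm.inverses_right β.right_inv β.left_inv
  have := hskew (β.symm (α.symm x)) (β.symm (α.symm y))
  simpa [inducedBracket, hcomm' _] using this

lemma inducedBracket_self [NeZero (2 : K)] (hcomm : Function.Commute α β)
    (hskew : ∀ x y : L, br (β x) (α y) = - br (β y) (α x)) (x : L) :
    inducedBracket br α β x x = 0 := by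
  have h : (2 : K) • inducedBracket br α β x x = 0 := by
    rw [two_smul]; nth_rw 1 [inducedBracket_skew hcomm hskew]; exact neg_add_cancel _
  exact (smul_eq_zero.mp h).resolve_left two_ne_zero

lemma inducedBracket_jacobi (hcomm : Function.Commute α β)
    (hmulβ : ∀ x y : L, β (br x y) = br (β x) (β y))
    (hjac : ∀ x y z : L,
      br (β (β x)) (br (β y) (α z)) + br (β (β y)) (br (β z) (α x))
        + br (β (β z)) (br (β x) (α y)) = 0) (x y z : L) :
    inducedBracket br α β x (inducedBracket br α β y z)
      + inducedBracket br α β y (inducedBracket br α β z x)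
      + inducedBracket br α β z (inducedBracket br α β x y) = 0 := by
  have hcomm' : Function.Commute α β.symm := hcomm.inverses_right β.right_inv β.left_inv
  have hmulβ' : ∀ a b, β.symm (br a b) = br (β.symm a) (β.symm b) := fun a b ↦ by
    rw [β.symm_apply_eq, hmulβ, β.apply_symm_apply, β.apply_symm_apply]
  have := hjac (β.symm (β.symm (α.symm x))) (β.symm (β.symm (α.symm y)))
    (β.symm (β.symm (α.symm z)))
  simpa [inducedBracket, hcomm' _, hmulβ'] using this

lemma inducedBracket_leibniz (hcomm : Function.Commute α β)
    (hmulβ : ∀ x y : L, β (br x y) = br (β x) (β y))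
    (hskew : ∀ x y : L, br (β x) (α y) = - br (β y) (α x))
    (hjac : ∀ x y z : L,
      br (β (β x)) (br (β y) (α z)) + br (β (β y)) (br (β z) (α x))
        + br (β (β z)) (br (β x) (α y)) = 0) (x y z : L) :
    inducedBracket br α β x (inducedBracket br α β y z) =
      inducedBracket br α β (inducedBracket br α β x y) z
        + inducedBracket br α β y (inducedBracket br α β x z) := by
  have h := inducedBracket_jacobi hcomm hmulβ hjac x y z
  rw [inducedBracket_skew hcomm hskew z x, inducedBracket_skew hcomm hskew z] at h
  simp only [inducedBracket, map_neg] at h ⊢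
  linear_combination (norm := module) h

end BiHom

lemma Module.Basis.repr_eq_zero_of_apply_eq_zero {ι R V : Type*} [CommRing R] [NoZeroDivisors R]
    [AddCommGroup V] [Module R V] (b : Basis ι R V) {f : V →ₗ[R] V} {μ : ι → R}
    (hf : ∀ i, f (b i) = μ i • b i) {v : V} (hv : f v = 0) {i : ι} (hi : μ i ≠ 0) :
    b.repr v i = 0 := by
  have hcoord : (b.coord i).comp f = μ i • b.coord i := b.ext fun j ↦ by
    by_cases hij : j = i
    · simp [hf, hij]
    · simp [hf, Ne.symm hij]
  have := congr($hcoord v)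
  simp only [LinearMap.comp_apply, hv, map_zero, LinearMap.smul_apply, Basis.coord_apply,
    smul_eq_mul] at this
  exact (mul_eq_zero.mp this.symm).resolve_left hi

lemma Module.End.exists_hasEigenvalue_and_neg_of_trace_eq_zero {K V : Type*} [Field K]
    [IsAlgClosed K] [AddCommGroup V] [Module K V] [FiniteDimensional K V]
    (hV : finrank K V = 3) {f : End K V} (h0 : f.HasEigenvalue 0)
    (htr : LinearMap.trace K V f = 0) (hf : ¬ IsNilpotent f) :
    ∃ c ≠ 0, f.HasEigenvalue c ∧ f.HasEigenvalue (-c) := by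
  have hsplit : f.charpoly.Splits := IsAlgClosed.splits _
  have hroots : ∀ c, f.HasEigenvalue c ↔ c ∈ f.charpoly.roots := fun c ↦ by
    rw [hasEigenvalue_iff_isRoot_charpoly, Polynomial.mem_roots f.charpoly_monic.ne_zero]
  have hcard : f.charpoly.roots.card = 3 := by
    rw [Polynomial.splits_iff_card_roots.mp hsplit, LinearMap.charpoly_natDegree, hV]
  obtain ⟨t, ht⟩ := Multiset.exists_cons_of_mem ((hroots 0).mp h0)
  obtain ⟨c, hct, hc⟩ : ∃ c ∈ t, c ≠ 0 := by
    by_contra! hzero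
    have : f.charpoly.roots = Multiset.replicate 3 0 :=
      Multiset.eq_replicate.mpr ⟨hcard, by simpa [ht] using hzero⟩
    apply hf
    rw [LinearMap.isNilpotent_iff_charpoly, hsplit.eq_prod_roots_of_monic f.charpoly_monic,
      this, hV]
    simp only [Multiset.map_replicate, Multiset.prod_replicate, map_zero, sub_zero]
  obtain ⟨s, hs⟩ := Multiset.exists_cons_of_mem hct
  obtain ⟨d, rfl⟩ := Multiset.card_eq_one.mp (by simpa [ht, hs] using hcard)
  have hcd : c + d = 0 := by
    simpa [htr, ht, hs] using (trace_eq_sum_roots_charpoly_of_splits hsplit).symm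
  rw [← neg_eq_of_add_eq_zero_right hcd] at hs
  exact ⟨c, hc, (hroots c).mpr (by simp [ht, hs]), (hroots _).mpr (by simp [ht, hs])⟩

section Sl2

variable {K L : Type*} [Field K] [LieRing L] [LieAlgebra K L]

lemma lowerCentralSeries_eq_top_of_lie_top_eq_top
    (h : ⁅(⊤ : LieIdeal K L), (⊤ : LieIdeal K L)⁆ = ⊤) (k : ℕ) :
    lowerCentralSeries K L L k = ⊤ := by
  induction k with
  | zero => rfl
  | succ k ih => rw [lowerCentralSeries_succ, ih, h]

lemma exists_not_isNilpotent_toEnd_of_lie_top_eq_top [Nontrivial L] [FiniteDimensional K L]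
    (h : ⁅(⊤ : LieIdeal K L), (⊤ : LieIdeal K L)⁆ = ⊤) :
    ∃ x : L, ¬ IsNilpotent (toEnd K L L x) := by
  by_contra! hnil
  have : LieRing.IsNilpotent L := LieAlgebra.isNilpotent_iff_forall.mpr hnil
  obtain ⟨k, hk⟩ := IsNilpotent.nilpotent K L L
  rw [lowerCentralSeries_eq_top_of_lie_top_eq_top h] at hk
  exact top_ne_bot hk

lemma trace_toEnd_eq_zero_of_lie_top_eq_top
    (h : ⁅(⊤ : LieIdeal K L), (⊤ : LieIdeal K L)⁆ = ⊤) (x : L) :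
    LinearMap.trace K L (toEnd K L L x) = 0 :=
  trace_toEnd_eq_zero_of_mem_lcs K L L le_rfl
    (by rw [lowerCentralSeries_eq_top_of_lie_top_eq_top h]; trivial)

lemma Module.Basis.coord_eq_zero_of_mem_lie_top_top {ι : Type*} (b : Basis ι K L) (i : ι)
    (h : ∀ j k, b.coord i ⁅b j, b k⁆ = 0) :
    ∀ w ∈ ⁅(⊤ : LieIdeal K L), (⊤ : LieIdeal K L)⁆, b.coord i w = 0 := by
  have hzero : (toEnd K L L : L →ₗ[K] End K L).compr₂ (b.coord i) = 0 :=
    LinearMap.ext_basis b b fun j k ↦ by simpa using h j k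
  intro w hw
  rw [← LieSubmodule.mem_toSubmodule, LieSubmodule.lieIdeal_oper_eq_linear_span'] at hw
  refine (Submodule.span_le (p := LinearMap.ker (b.coord i))).mpr ?_ hw
  rintro _ ⟨u, -, v, -, rfl⟩
  simpa using congr($hzero u v)

lemma lie_lie_eq_add_smul {x y z : L} {c d : K} (hy : ⁅x, y⁆ = c • y) (hz : ⁅x, z⁆ = d • z) :
    ⁅x, ⁅y, z⁆⁆ = (c + d) • ⁅y, z⁆ := by
  rw [leibniz_lie, hy, hz, smul_lie, lie_smul, add_smul]

lemma exists_sl2_basis_of_lie_eq_smul [NeZero (2 : K)] (b : Basis (Fin 3) K L) {c r : K}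
    (hc : c ≠ 0) (hr : r ≠ 0) (h01 : ⁅b 0, b 1⁆ = c • b 1) (h02 : ⁅b 0, b 2⁆ = -c • b 2)
    (h12 : ⁅b 1, b 2⁆ = r • b 0) :
    ∃ b' : Basis (Fin 3) K L,
      ⁅b' 0, b' 1⁆ = (2 : K) • b' 1 ∧ ⁅b' 0, b' 2⁆ = (-2 : K) • b' 2 ∧ ⁅b' 1, b' 2⁆ = b' 0 := by
  have hw : ∀ i, IsUnit (![2 / c, 1, 2 / (c * r)] i) := by
    intro i; fin_cases i <;> simp [hc, hr, two_ne_zero]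
  refine ⟨b.isUnitSMul hw, ?_, ?_, ?_⟩ <;>
    simp only [Basis.isUnitSMul_apply, smul_lie, lie_smul, h01, h02, h12, smul_smul] <;>
    congr 1 <;> simp <;> field_simp

lemma exists_sl2_basis_of_hasEigenvector [NeZero (2 : K)] (hdim : finrank K L = 3)
    (hperfect : ⁅(⊤ : LieIdeal K L), (⊤ : LieIdeal K L)⁆ = ⊤) {x y z : L} {c : K} (hc : c ≠ 0)
    (hx : x ≠ 0) (hy : (toEnd K L L x).HasEigenvector c y)
    (hz : (toEnd K L L x).HasEigenvector (-c) z) :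
    ∃ b : Basis (Fin 3) K L,
      ⁅b 0, b 1⁆ = (2 : K) • b 1 ∧ ⁅b 0, b 2⁆ = (-2 : K) • b 2 ∧ ⁅b 1, b 2⁆ = b 0 := by
  have hxy : ⁅x, y⁆ = c • y := hy.apply_eq_smul
  have hxz : ⁅x, z⁆ = -c • z := hz.apply_eq_smul
  have hμ : Function.Injective ![0, c, -c] := by
    have : c ≠ -c := fun h ↦ hc <| by
      simpa [two_ne_zero] using (by linear_combination h : (2 : K) * c = 0)
    intro i j; fin_cases i <;> fin_cases j <;> simp [hc, hc.symm, this, this.symm]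
  have hli : LinearIndependent K ![x, y, z] :=
    End.eigenvectors_linearIndependent' (toEnd K L L x) _ hμ _ fun i ↦ by
      fin_cases i
      exacts [⟨by simp, hx⟩, hy, hz]
  have hcard : Fintype.card (Fin 3) = finrank K L := by simp [hdim]
  set b := basisOfLinearIndependentOfCardEqFinrank hli hcard
  have hb : ⇑b = ![x, y, z] := coe_basisOfLinearIndependentOfCardEqFinrank hli hcard
  have hdiag : ∀ i, toEnd K L L x (b i) = ![0, c, -c] i • b i := fun i ↦ by
    fin_cases i <;> simp [hb, hxy, hxz]
  have hker : toEnd K L L x ⁅y, z⁆ = 0 := by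
    rw [toEnd_apply_apply, lie_lie_eq_add_smul hxy hxz, add_neg_cancel, zero_smul]
  have hyz : ⁅y, z⁆ = b.repr ⁅y, z⁆ 0 • x := by
    have h1 := b.repr_eq_zero_of_apply_eq_zero hdiag hker (i := 1) (by simpa using hc)
    have h2 := b.repr_eq_zero_of_apply_eq_zero hdiag hker (i := 2) (by simpa using hc)
    simpa [Fin.sum_univ_three, hb, h1, h2] using (b.sum_repr ⁅y, z⁆).symm
  have h01 : ⁅b 0, b 1⁆ = c • b 1 := by simpa [hb] using hxy
  have h02 : ⁅b 0, b 2⁆ = -c • b 2 := by simpa [hb] using hxz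
  have h12 : ⁅b 1, b 2⁆ = b.repr ⁅y, z⁆ 0 • b 0 := by simpa [hb] using hyz
  refine exists_sl2_basis_of_lie_eq_smul b hc ?_ h01 h02 h12
  intro hr
  rw [hr, zero_smul] at h12
  have hcoord := b.coord_eq_zero_of_mem_lie_top_top 0 fun j k ↦ by
    fin_cases j <;> fin_cases k <;>
      simp [h01, h02, h12, ← lie_skew (b 1) (b 0), ← lie_skew (b 2) (b 0),
        ← lie_skew (b 2) (b 1)]
  simpa using hcoord (b 0) (by rw [hperfect]; exact LieSubmodule.mem_top _)

theorem exists_sl2_basis_of_lie_top_eq_top [IsAlgClosed K] [NeZero (2 : K)]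
    (hdim : finrank K L = 3) (hperfect : ⁅(⊤ : LieIdeal K L), (⊤ : LieIdeal K L)⁆ = ⊤) :
    ∃ b : Basis (Fin 3) K L,
      ⁅b 0, b 1⁆ = (2 : K) • b 1 ∧ ⁅b 0, b 2⁆ = (-2 : K) • b 2 ∧ ⁅b 1, b 2⁆ = b 0 := by
  have : FiniteDimensional K L := Module.finite_of_finrank_eq_succ hdim
  have : Nontrivial L := Module.nontrivial_of_finrank_eq_succ hdim
  obtain ⟨x, hx⟩ := exists_not_isNilpotent_toEnd_of_lie_top_eq_top hperfect
  have hx0 : x ≠ 0 := by rintro rfl; simp at hx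
  have h0 : (toEnd K L L x).HasEigenvalue 0 :=
    End.hasEigenvalue_of_hasEigenvector (x := x) ⟨by simp, hx0⟩
  obtain ⟨c, hc, hcy, hcz⟩ := End.exists_hasEigenvalue_and_neg_of_trace_eq_zero hdim h0
    (trace_toEnd_eq_zero_of_lie_top_eq_top hperfect x) hx
  obtain ⟨y, hy⟩ := hcy.exists_hasEigenvector
  obtain ⟨z, hz⟩ := hcz.exists_hasEigenvector
  exact exists_sl2_basis_of_hasEigenvector hdim hperfect hc hx0 hy hz

end Sl2

/-- The induced Lie algebra of a 3-dimensional simple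
multiplicative BiHom-Lie algebra over `ℂ` is isomorphic to `sl(2, ℂ)`: there is a
basis `(h, e, f)` with `[h,e]' = 2e`, `[h,f]' = -2f` and `[e,f]' = h`. -/
theorem induced_lie_of_dim_three_is_sl2 {L : Type*} [AddCommGroup L] [Module ℂ L]
    (hdim : Module.finrank ℂ L = 3)
    (br : L →ₗ[ℂ] L →ₗ[ℂ] L) (α β : L ≃ₗ[ℂ] L)
    (hcomm : ∀ x : L, α (β x) = β (α x))
    (hmulα : ∀ x y : L, α (br x y) = br (α x) (α y))
    (hmulβ : ∀ x y : L, β (br x y) = br (β x) (β y))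
    (hskew : ∀ x y : L, br (β x) (α y) = - br (β y) (α x))
    (hjac : ∀ x y z : L,
      br (β (β x)) (br (β y) (α z)) + br (β (β y)) (br (β z) (α x))
        + br (β (β z)) (br (β x) (α y)) = 0)
    (hsimple : IsSimpleBiHom br α.toLinearMap β.toLinearMap) :
    ∃ b : Module.Basis (Fin 3) ℂ L,
      inducedBracket br α β (b 0) (b 1) = (2 : ℂ) • b 1 ∧
      inducedBracket br α β (b 0) (b 2) = (-2 : ℂ) • b 2 ∧
      inducedBracket br α β (b 1) (b 2) = b 0 := by
  let _ : LieRing L :=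
    { bracket := inducedBracket br α β
      add_lie := fun _ _ _ ↦ by simp [inducedBracket]
      lie_add := fun _ _ _ ↦ by simp [inducedBracket]
      lie_self := inducedBracket_self hcomm hskew
      leibniz_lie := inducedBracket_leibniz hcomm hmulβ hskew hjac }
  let _ : LieAlgebra ℂ L :=
    { lie_smul := fun t x y ↦
        show inducedBracket br α β x (t • y) = t • inducedBracket br α β x y by
          simp [inducedBracket] }
  have hperfect : ⁅(⊤ : LieIdeal ℂ L), (⊤ : LieIdeal ℂ L)⁆ = ⊤ := by
    rw [eq_top_iff, ← LieSubmodule.toSubmodule_le_toSubmodule, LieSubmodule.top_toSubmodule,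
      ← hsimple.map₂_top_eq_top hmulα hmulβ, Submodule.map₂_le]
    intro u _ v _
    have huv : inducedBracket br α β (α u) (β v) = br u v := by simp [inducedBracket]
    exact huv ▸ LieSubmodule.lie_mem_lie (LieSubmodule.mem_top _) (LieSubmodule.mem_top _)
  exact exists_sl2_basis_of_lie_top_eq_top hdim hperfect
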